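/- Let G ≤ S_fin(ℕ) be a group of finitary permutations of ℕ and let w(ȳ) = u_n v_n ⋯ u_1 v_1 be a reduced word with constants v_i ∈ G \ {1} such that the word u_n u_{n-1}⋯u_1 (obtained by deleting all constants and reducing in the free group) is non-trivial. Then the set X_{0̄} = ⋂_{i=1}^n v_1^{-1}⋯v_{i-1}^{-1}(ℕ \ supp(v_i)) is cofinite (and in particular infinite), and for any tuple ḡ ∈ G^t whose members have supports contained in X_{0̄} and which satisfies u_n⋯u_1(ḡ)(p) ≠ p for some p ∈ X_{0̄}, one has w(ḡ) ≠ 1. -/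

import Mathlib

/-! Every `gⱼ` fixes the complement of `X_{0̄}` pointwise, hence maps `X_{0̄}` into itself, and
each constant `vᵢ` is met, during the evaluation of `w(ḡ)` at a point of `X_{0̄}`, at a point it
fixes. So `w(ḡ)` and `u_n⋯u_1(ḡ)` agree on `X_{0̄}`. Cofiniteness: `X_{0̄}` is a finite
intersection of preimages of cofinite sets under permutations. -/

/-- Evaluation at `ḡ` of a word with constants `w = u_n v_n ⋯ u_1 v_1` over the group
of permutations of `ℕ`, encoded as the list of blocks `[(u₁, v₁), …, (u_n, v_n)]`. -/
def evalWordC {t : ℕ} (g : Fin t → Equiv.Perm ℕ) :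
    List (FreeGroup (Fin t) × Equiv.Perm ℕ) → Equiv.Perm ℕ
  | [] => 1
  | (u, v) :: rest => evalWordC g rest * (FreeGroup.lift g) u * v

/-- `X_{0̄} = ⋂_{i} v₁⁻¹⋯v_{i-1}⁻¹(ℕ \ supp(vᵢ))` for the list of constants
`[v₁, …, v_n]` (first applied first). -/
def X0 : List (Equiv.Perm ℕ) → Set ℕ
  | [] => Set.univ
  | v :: rest => {x : ℕ | v x = x} ∩ (fun x : ℕ => v x) ⁻¹' X0 rest

theorem X0_cons_subset (v : Equiv.Perm ℕ) (l : List (Equiv.Perm ℕ)) : X0 (v :: l) ⊆ X0 l := by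
  rintro x ⟨hvx, hx⟩
  rwa [Set.mem_preimage, show v x = x from hvx] at hx

theorem compl_X0_finite :
    ∀ l : List (Equiv.Perm ℕ), (∀ v ∈ l, {x : ℕ | v x ≠ x}.Finite) → (X0 l)ᶜ.Finite
  | [], _ => by simp [X0]
  | v :: l, hl => by
    have hv : {x : ℕ | v x = x}ᶜ.Finite := hl v List.mem_cons_self
    have hl' : (X0 l)ᶜ.Finite := compl_X0_finite l fun w hw => hl w (List.mem_cons_of_mem v hw)
    rw [X0, Set.compl_inter, ← Set.preimage_compl]
    exact hv.union (hl'.preimage v.injective.injOn)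

theorem FreeGroup.lift_perm_apply_of_notMem {ι α : Type*} {g : ι → Equiv.Perm α} {S : Set α}
    (hg : ∀ i, {x | g i x ≠ x} ⊆ S) (u : FreeGroup ι) {x : α} (hx : x ∉ S) :
    FreeGroup.lift g u x = x := by
  have hrange : (FreeGroup.lift g).range ≤ fixingSubgroup (Equiv.Perm α) Sᶜ :=
    FreeGroup.range_lift_le <| by
      rintro _ ⟨i, rfl⟩
      exact (mem_fixingSubgroup_iff _).mpr fun y hy => not_not.mp fun h => hy (hg i h)
  exact (mem_fixingSubgroup_iff _).mp (hrange ⟨u, rfl⟩) x hx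

theorem Equiv.Perm.apply_mem_of_forall_notMem_apply_eq {α : Type*} {σ : Equiv.Perm α}
    {S T : Set α} (hσ : ∀ x ∉ S, σ x = x) (hST : S ⊆ T) {x : α} (hx : x ∈ T) : σ x ∈ T := by
  by_cases hxS : x ∈ S
  · by_contra hσx
    have hfix : σ (σ x) = σ x := hσ _ fun h => hσx (hST h)
    exact hσx (by rwa [σ.injective hfix])
  · exact (hσ x hxS).symm ▸ hx

theorem evalWordC_apply_of_mem_X0 {t : ℕ} {g : Fin t → Equiv.Perm ℕ} {S : Set ℕ}
    (hg : ∀ i, {x | g i x ≠ x} ⊆ S) :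
    ∀ {blocks : List (FreeGroup (Fin t) × Equiv.Perm ℕ)}, S ⊆ X0 (blocks.map Prod.snd) →
      ∀ {p : ℕ}, p ∈ X0 (blocks.map Prod.snd) →
        evalWordC g blocks p = FreeGroup.lift g (blocks.map Prod.fst).reverse.prod p
  | [], _, _, _ => by simp [evalWordC]
  | (u, v) :: rest, hS, p, ⟨hvp, hp⟩ => by
    have hvp : v p = p := hvp
    have hS' : S ⊆ X0 (rest.map Prod.snd) := hS.trans (X0_cons_subset _ _)
    have hup : FreeGroup.lift g u p ∈ X0 (rest.map Prod.snd) :=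
      Equiv.Perm.apply_mem_of_forall_notMem_apply_eq
        (fun _ => FreeGroup.lift_perm_apply_of_notMem hg u) hS'
        (by rwa [Set.mem_preimage, hvp] at hp)
    simp only [evalWordC, Equiv.Perm.mul_apply, hvp, evalWordC_apply_of_mem_X0 hg hS' hup,
      List.map_cons, List.reverse_cons, List.prod_append, List.prod_singleton, map_mul]

theorem stmt17_general {t : ℕ} (blocks : List (FreeGroup (Fin t) × Equiv.Perm ℕ))
    (hb : ∀ b ∈ blocks, b.2 ≠ 1 ∧ {x : ℕ | b.2 x ≠ x}.Finite) :
    ((X0 (blocks.map Prod.snd))ᶜ : Set ℕ).Finite ∧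
    ∀ (g : Fin t → Equiv.Perm ℕ) (p : ℕ),
      (∀ i, {x : ℕ | g i x ≠ x}.Finite) →
      (∀ i, {x : ℕ | g i x ≠ x} ⊆ X0 (blocks.map Prod.snd)) →
      p ∈ X0 (blocks.map Prod.snd) →
      ((FreeGroup.lift g) ((blocks.map Prod.fst).reverse.prod)) p ≠ p →
      evalWordC g blocks ≠ 1 := by
  refine ⟨compl_X0_finite _ ?_, fun g p _ hg hp hne hw => hne ?_⟩
  · intro v hv
    obtain ⟨b, hb_mem, rfl⟩ := List.mem_map.mp hv
    exact (hb b hb_mem).2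
  · rw [← evalWordC_apply_of_mem_X0 hg subset_rfl hp, hw, Equiv.Perm.one_apply]

/-- Let `G ≤ S_fin(ℕ)` and let `w(ȳ) = u_n v_n ⋯ u_1 v_1` be a reduced
word whose constants `vᵢ` are non-trivial finitary permutations of `ℕ`, such that the
word `u_n ⋯ u_1` (delete all constants, reduce in the free group) is non-trivial.
Then `X_{0̄}` is cofinite (in particular infinite), and any tuple `ḡ` of finitary
permutations supported in `X_{0̄}` with `u_n⋯u_1(ḡ)(p) ≠ p` for some `p ∈ X_{0̄}`
satisfies `w(ḡ) ≠ 1`. -/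
theorem stmt17 {t : ℕ} (blocks : List (FreeGroup (Fin t) × Equiv.Perm ℕ))
    (hb : ∀ b ∈ blocks, b.2 ≠ 1 ∧ {x : ℕ | b.2 x ≠ x}.Finite)
    (hu : ((blocks.map Prod.fst).reverse).prod ≠ 1) :
    ((X0 (blocks.map Prod.snd))ᶜ : Set ℕ).Finite ∧
    ∀ (g : Fin t → Equiv.Perm ℕ) (p : ℕ),
      (∀ i, {x : ℕ | g i x ≠ x}.Finite) →
      (∀ i, {x : ℕ | g i x ≠ x} ⊆ X0 (blocks.map Prod.snd)) →
      p ∈ X0 (blocks.map Prod.snd) →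
      ((FreeGroup.lift g) ((blocks.map Prod.fst).reverse.prod)) p ≠ p →
      evalWordC g blocks ≠ 1 :=
  stmt17_general blocks hb
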